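/- Let α > 0, set β = α/√(1+α) and c = 1/√(1+α), and define w : ℝ → ℝ by w(ξ) = (1 - exp(βξ))^(1/α) (real power). Then for every ξ < 0 the profile w satisfies the travelling-wave ODE c·w'(ξ) + d/dξ[ w(ξ)^α · w'(ξ) ] + w(ξ)·(1 - w(ξ)^α) = 0, where all derivatives exist in the classical sense at each ξ < 0. -/

import Mathlib

/-!
Write `y = 1 - e^{βξ}`, so that `w = y^{1/α}` and `w^α = y`. Then `w' = -(β/α) e^{βξ} w / y`, hence
the flux `w^α w' = -(β/α) e^{βξ} w` is an explicit product whose derivative is computed directly.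
With `β = α c`, the left side of the ODE collapses to `e^{βξ} w (1 - c² (1 + α))`, which vanishes
because `c = 1/√(1+α)`.
-/

open Real Filter Topology

theorem HasDerivAt.rpow_one_div {y : ℝ → ℝ} {y' t : ℝ} (α : ℝ) (hy : HasDerivAt y y' t)
    (hpos : 0 < y t) :
    HasDerivAt (fun s => y s ^ (1 / α)) (y' / α * (y t ^ (1 / α) / y t)) t := by
  refine (hy.rpow_const (Or.inl hpos.ne')).congr_deriv ?_
  rw [rpow_sub_one hpos.ne']
  ring

noncomputable def newmanProfile (α β s : ℝ) : ℝ := (1 - exp (β * s)) ^ (1 / α)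

section
variable {α β : ℝ}

theorem one_sub_exp_mul_pos (hβ : 0 < β) {s : ℝ} (hs : s < 0) : 0 < 1 - exp (β * s) :=
  sub_pos.2 (exp_lt_one_iff.2 (mul_neg_of_pos_of_neg hβ hs))

theorem hasDerivAt_one_sub_exp_mul (β t : ℝ) :
    HasDerivAt (fun s => 1 - exp (β * s)) (-(β * exp (β * t))) t := by
  have := ((hasDerivAt_id t).const_mul β).exp.const_sub 1
  exact this.congr_deriv (by simp [mul_comm])

theorem newmanProfile_rpow (hα : α ≠ 0) {s : ℝ} (hs : 0 ≤ 1 - exp (β * s)) :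
    newmanProfile α β s ^ α = 1 - exp (β * s) := by
  rw [newmanProfile, one_div, rpow_inv_rpow hs hα]

theorem hasDerivAt_newmanProfile {t : ℝ} (ht : 0 < 1 - exp (β * t)) :
    HasDerivAt (newmanProfile α β)
      (-(β / α) * exp (β * t) / (1 - exp (β * t)) * newmanProfile α β t) t := by
  refine ((hasDerivAt_one_sub_exp_mul β t).rpow_one_div α ht).congr_deriv ?_
  rw [newmanProfile]
  ring

theorem newmanProfile_flux_eventuallyEq (hα : α ≠ 0) (hβ : 0 < β) {ξ : ℝ} (hξ : ξ < 0) :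
    (fun s => newmanProfile α β s ^ α * deriv (newmanProfile α β) s) =ᶠ[𝓝 ξ]
      fun s => -(β / α) * exp (β * s) * newmanProfile α β s := by
  filter_upwards [Iio_mem_nhds hξ] with s hs
  have hy := one_sub_exp_mul_pos hβ hs
  rw [newmanProfile_rpow hα hy.le, (hasDerivAt_newmanProfile hy).deriv]
  field_simp

theorem hasDerivAt_newmanFlux {t : ℝ} (ht : 0 < 1 - exp (β * t)) :
    HasDerivAt (fun s => -(β / α) * exp (β * s) * newmanProfile α β s)
      (-(β / α) * (β * exp (β * t) * newmanProfile α β t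
        + exp (β * t) * (-(β / α) * exp (β * t) / (1 - exp (β * t)) * newmanProfile α β t))) t := by
  have hexp := ((hasDerivAt_id t).const_mul β).exp
  exact ((hexp.const_mul (-(β / α))).mul (hasDerivAt_newmanProfile ht)).congr_deriv (by simp; ring)

end

/-- The Newman profile `w(ξ) = (1 - e^{βξ})^{1/α}` with `β = α/√(1+α)` and
`c = 1/√(1+α)` satisfies, for every `ξ < 0`, the travelling-wave ODE
`c w' + (w^α w')' + w(1 - w^α) = 0`, all derivatives existing classically. -/
theorem travelling_wave_profile_ode
    (α β c : ℝ) (hα : 0 < α)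
    (hβ : β = α / Real.sqrt (1 + α))
    (hc : c = 1 / Real.sqrt (1 + α))
    (w : ℝ → ℝ) (hw : ∀ ξ : ℝ, w ξ = (1 - Real.exp (β * ξ)) ^ (1 / α)) :
    ∀ ξ < (0 : ℝ),
      DifferentiableAt ℝ w ξ ∧
      DifferentiableAt ℝ (fun s => w s ^ α * deriv w s) ξ ∧
      c * deriv w ξ + deriv (fun s => w s ^ α * deriv w s) ξ
        + w ξ * (1 - w ξ ^ α) = 0 := by
  obtain rfl : w = newmanProfile α β := funext hw
  have hsqrt : 0 < √(1 + α) := sqrt_pos.2 (by linarith)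
  have hβc : β = α * c := by rw [hβ, hc]; ring
  have hc2 : c ^ 2 * (1 + α) = 1 := by
    rw [hc, div_pow, sq_sqrt (by linarith)]; field_simp
  intro ξ hξ
  have hβ0 : 0 < β := hβ ▸ div_pos hα hsqrt
  have hy := one_sub_exp_mul_pos hβ0 hξ
  have hprofile := hasDerivAt_newmanProfile (α := α) hy
  have hflux := (hasDerivAt_newmanFlux hy).congr_of_eventuallyEq
    (newmanProfile_flux_eventuallyEq hα.ne' hβ0 hξ)
  refine ⟨hprofile.differentiableAt, hflux.differentiableAt, ?_⟩
  rw [hprofile.deriv, hflux.deriv, newmanProfile_rpow hα.ne' hy.le]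
  generalize exp (β * ξ) = E at hy ⊢
  generalize newmanProfile α β ξ = W
  rw [hβc, mul_div_cancel_left₀ c hα.ne']
  have hy' : 1 - E ≠ 0 := hy.ne'
  field_simp
  linear_combination (-(E * W * (1 - E))) * hc2
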